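/- Let C = {C_1,…,C_K} be a clustering of {1,…,n} and let A be an n×n stochastic matrix that has inter-cluster common influence w.r.t. C, has cluster-spanning-trees w.r.t. C, and has all diagonal entries positive. Then the cluster Hajnal diameters of the powers of A decay exponentially: there exist M ≥ 0 and q ∈ (0,1) such that Δ_C(A^t) ≤ M q^t for all t ≥ 1; in particular Δ_C(A^t) → 0 as t → ∞. -/
import Mathlib


open Finset Filter Topology Matrix

/-- An `n × n` real matrix is stochastic if all entries are nonnegative and
every row sums to `1`. -/
def IsStochastic {n : ℕ} (A : Matrix (Fin n) (Fin n) ℝ) : Prop :=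
  (∀ i j, 0 ≤ A i j) ∧ ∀ i, ∑ j, A i j = 1

/-- A clustering of `{1,…,n}`: pairwise disjoint subsets whose union is everything. -/
def IsClustering {n K : ℕ} (C : Fin K → Finset (Fin n)) : Prop :=
  (∀ p q, p ≠ q → Disjoint (C p) (C q)) ∧ ∀ i, ∃ p, i ∈ C p

/-- Reachability along directed edges of `G(A)`: edge from `j` to `i` iff `A i j > 0`. -/
def Reaches {n : ℕ} (A : Matrix (Fin n) (Fin n) ℝ) : Fin n → Fin n → Prop :=
  Relation.ReflTransGen fun j i => 0 < A i j

/-- `A` has cluster-spanning-trees w.r.t. `C`: for each cluster there is a vertex from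
which every vertex of the cluster is reachable in `G(A)`. -/
def HasClusterSpanningTrees {n K : ℕ} (C : Fin K → Finset (Fin n))
    (A : Matrix (Fin n) (Fin n) ℝ) : Prop :=
  ∀ p, ∃ v, ∀ i ∈ C p, Reaches A v i

/-- Inter-cluster common influence: `∑_{j ∈ C q} A i j` is the same for all `i ∈ C p`. -/
def InterClusterCommonInfluence {n K : ℕ} (C : Fin K → Finset (Fin n))
    (A : Matrix (Fin n) (Fin n) ℝ) : Prop :=
  ∀ p q, ∀ i ∈ C p, ∀ i' ∈ C p, ∑ j ∈ C q, A i j = ∑ j ∈ C q, A i' j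

/-- Cluster ergodicity coefficient
`μ_C(A) = min_p min_{i,j ∈ C p} ∑_k min (A i k) (A j k)`. -/
noncomputable def muC {n K : ℕ} (C : Fin K → Finset (Fin n))
    (A : Matrix (Fin n) (Fin n) ℝ) : ℝ :=
  sInf {s | ∃ p, ∃ i ∈ C p, ∃ j ∈ C p, s = ∑ k, min (A i k) (A j k)}

/-- Cluster Hajnal diameter `Δ_C(A) = max_p max_{i,j ∈ C p} max_k |A i k - A j k|`. -/
noncomputable def DeltaC {n K : ℕ} (C : Fin K → Finset (Fin n))
    (A : Matrix (Fin n) (Fin n) ℝ) : ℝ :=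
  sSup {d | ∃ p, ∃ i ∈ C p, ∃ j ∈ C p, ∃ k, d = |A i k - A j k|}

/-- The cluster-consensus subspace `S_C`. -/
def SC {n K : ℕ} (C : Fin K → Finset (Fin n)) : Set (Fin n → ℝ) :=
  {x | ∀ p, ∀ i ∈ C p, ∀ j ∈ C p, x i = x j}

/-- Left product `prodFrom A a m = A (a+m-1) * ⋯ * A (a+1) * A a` (with `m` factors). -/
def prodFrom {n : ℕ} (A : ℕ → Matrix (Fin n) (Fin n) ℝ) (a : ℕ) :
    ℕ → Matrix (Fin n) (Fin n) ℝ
  | 0 => 1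
  | m + 1 => A (a + m) * prodFrom A a m

section helpers
variable {n K : ℕ} {C : Fin K → Finset (Fin n)}

lemma delta_bdd (B : Matrix (Fin n) (Fin n) ℝ) :
    BddAbove {d | ∃ p, ∃ i ∈ C p, ∃ j ∈ C p, ∃ k, d = |B i k - B j k|} := by
  apply Set.Finite.bddAbove
  apply (Set.finite_range (fun x : Fin K × Fin n × Fin n × Fin n => |B x.2.1 x.2.2.2 - B x.2.2.1 x.2.2.2|)).subset
  rintro d ⟨p, i, hi, j, hj, k, rfl⟩
  exact ⟨(p, i, j, k), rfl⟩

lemma abs_le_delta {B : Matrix (Fin n) (Fin n) ℝ} {p i j} (hi : i ∈ C p) (hj : j ∈ C p) (k) :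
    |B i k - B j k| ≤ DeltaC C B :=
  le_csSup (delta_bdd B) ⟨p, i, hi, j, hj, k, rfl⟩

lemma delta_nonneg (B : Matrix (Fin n) (Fin n) ℝ) : 0 ≤ DeltaC C B := by
  rcases Set.eq_empty_or_nonempty
      {d | ∃ p, ∃ i ∈ C p, ∃ j ∈ C p, ∃ k, d = |B i k - B j k|} with he | ⟨d, hd⟩
  · simp [DeltaC, he, Real.sSup_empty]
  · obtain ⟨p, i, hi, j, hj, k, rfl⟩ := hd
    exact le_trans (abs_nonneg _) (abs_le_delta hi hj k)

lemma delta_le {B : Matrix (Fin n) (Fin n) ℝ} {M : ℝ} (hM : 0 ≤ M)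
    (h : ∀ p, ∀ i ∈ C p, ∀ j ∈ C p, ∀ k, |B i k - B j k| ≤ M) : DeltaC C B ≤ M := by
  apply Real.sSup_le _ hM
  rintro d ⟨p, i, hi, j, hj, k, rfl⟩
  exact h p i hi j hj k

lemma stoch_one : IsStochastic (1 : Matrix (Fin n) (Fin n) ℝ) := by
  constructor
  · intro i j; by_cases h : i = j <;> simp [Matrix.one_apply, h]
  · intro i; simp [Matrix.one_apply]

lemma stoch_mul {A B : Matrix (Fin n) (Fin n) ℝ} (hA : IsStochastic A) (hB : IsStochastic B) :
    IsStochastic (A * B) := by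
  constructor
  · intro i j
    rw [Matrix.mul_apply]
    exact Finset.sum_nonneg fun l _ => mul_nonneg (hA.1 i l) (hB.1 l j)
  · intro i
    simp only [Matrix.mul_apply]
    rw [Finset.sum_comm]
    simp [← Finset.mul_sum, hB.2, hA.2]

lemma stoch_pow {A : Matrix (Fin n) (Fin n) ℝ} (hA : IsStochastic A) (t : ℕ) :
    IsStochastic (A ^ t) := by
  induction t with
  | zero => simpa using stoch_one
  | succ t ih => rw [pow_succ]; exact stoch_mul ih hA

lemma stoch_entry_le_one {A : Matrix (Fin n) (Fin n) ℝ} (hA : IsStochastic A) (i j) :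
    A i j ≤ 1 := by
  rw [← hA.2 i]
  exact Finset.single_le_sum (fun k _ => hA.1 i k) (Finset.mem_univ j)

lemma sum_clusters (hC : IsClustering C) (f : Fin n → ℝ) :
    ∑ l, f l = ∑ q, ∑ l ∈ C q, f l := by
  classical
  have hU : Finset.univ.biUnion C = Finset.univ := by
    ext l; simp only [Finset.mem_biUnion, Finset.mem_univ, true_and, iff_true]
    exact hC.2 l
  rw [← hU, Finset.sum_biUnion]
  intro p _ q _ hpq
  exact hC.1 p q hpq

lemma ici_one (hC : IsClustering C) :
    InterClusterCommonInfluence C (1 : Matrix (Fin n) (Fin n) ℝ) := by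
  intro p q i hi i' hi'
  have key : ∀ j ∈ C p, ((∑ l ∈ C q, (1 : Matrix (Fin n) (Fin n) ℝ) j l)
      = if p = q then 1 else 0) := by
    intro j hj
    simp only [Matrix.one_apply, Finset.sum_ite_eq]
    by_cases h : p = q
    · subst h; simp [hj]
    · have hnm : j ∉ C q := fun hm => (Finset.disjoint_left.mp (hC.1 p q h) hj) hm
      simp [h, hnm]
  rw [key i hi, key i' hi']

lemma ici_mul (hC : IsClustering C) {P Q : Matrix (Fin n) (Fin n) ℝ}
    (hP : InterClusterCommonInfluence C P) (hQ : InterClusterCommonInfluence C Q) :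
    InterClusterCommonInfluence C (P * Q) := by
  intro p q i hi i' hi'
  have expand : ∀ x : Fin n, ∑ j ∈ C q, (P * Q) x j = ∑ r, ∑ l ∈ C r, P x l * (∑ j ∈ C q, Q l j) := by
    intro x
    simp only [Matrix.mul_apply]
    rw [Finset.sum_comm]
    rw [sum_clusters hC (f := fun l => ∑ j ∈ C q, P x l * Q l j)]
    congr 1; ext r; congr 1; ext l; rw [Finset.mul_sum]
  rw [expand i, expand i']
  apply Finset.sum_congr rfl
  intro r _
  rcases (C r).eq_empty_or_nonempty with he | ⟨l0, hl0⟩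
  · simp [he]
  · have hconst : ∀ l ∈ C r, (∑ j ∈ C q, Q l j) = ∑ j ∈ C q, Q l0 j :=
      fun l hl => hQ r q l hl l0 hl0
    calc ∑ l ∈ C r, P i l * (∑ j ∈ C q, Q l j)
        = ∑ l ∈ C r, P i l * (∑ j ∈ C q, Q l0 j) :=
          Finset.sum_congr rfl (fun l hl => by rw [hconst l hl])
      _ = (∑ l ∈ C r, P i l) * (∑ j ∈ C q, Q l0 j) := (Finset.sum_mul _ _ _).symm
      _ = (∑ l ∈ C r, P i' l) * (∑ j ∈ C q, Q l0 j) := by rw [hP p r i hi i' hi']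
      _ = ∑ l ∈ C r, P i' l * (∑ j ∈ C q, Q l0 j) := Finset.sum_mul _ _ _
      _ = ∑ l ∈ C r, P i' l * (∑ j ∈ C q, Q l j) :=
          Finset.sum_congr rfl (fun l hl => by rw [hconst l hl])

lemma ici_pow (hC : IsClustering C) {A : Matrix (Fin n) (Fin n) ℝ}
    (hA : InterClusterCommonInfluence C A) (t : ℕ) :
    InterClusterCommonInfluence C (A ^ t) := by
  induction t with
  | zero => simpa using ici_one hC
  | succ t ih => rw [pow_succ']; exact ici_mul hC hA ih

end helpers

section core
variable {n K : ℕ} {C : Fin K → Finset (Fin n)}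

lemma cluster_sum_le {S : Finset (Fin n)} (d g : Fin n → ℝ)
    (hzero : ∑ l ∈ S, d l = 0) {Δ : ℝ} (hΔ : 0 ≤ Δ)
    (hosc : ∀ l ∈ S, ∀ l' ∈ S, |g l - g l'| ≤ Δ) :
    ∑ l ∈ S, d l * g l ≤ (∑ l ∈ S, max (d l) 0) * Δ := by
  rcases S.eq_empty_or_nonempty with rfl | hne
  · simp
  · set Mq := S.sup' hne g with hMq
    set mq := S.inf' hne g with hmq
    have h1 : ∑ l ∈ S, d l * g l ≤ (∑ l ∈ S, max (d l) 0) * Mq + (∑ l ∈ S, min (d l) 0) * mq := by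
      rw [Finset.sum_mul, Finset.sum_mul, ← Finset.sum_add_distrib]
      apply Finset.sum_le_sum
      intro l hl
      have hdl : d l = max (d l) 0 + min (d l) 0 := by
        have := max_add_min (d l) 0; linarith
      have ha : max (d l) 0 * g l ≤ max (d l) 0 * Mq :=
        mul_le_mul_of_nonneg_left (S.le_sup' g hl) (le_max_right _ 0)
      have hb : min (d l) 0 * g l ≤ min (d l) 0 * mq :=
        mul_le_mul_of_nonpos_left (S.inf'_le g hl) (min_le_right _ 0)
      calc d l * g l = max (d l) 0 * g l + min (d l) 0 * g l := by rw [← add_mul, ← hdl]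
        _ ≤ _ := add_le_add ha hb
    have h2 : ∑ l ∈ S, min (d l) 0 = - ∑ l ∈ S, max (d l) 0 := by
      have hs : ∀ l : Fin n, max (d l) 0 + min (d l) 0 = d l := fun l => by
        have := max_add_min (d l) 0; linarith
      have hsum : (∑ l ∈ S, max (d l) 0) + ∑ l ∈ S, min (d l) 0 = 0 := by
        rw [← Finset.sum_add_distrib, Finset.sum_congr rfl fun l _ => hs l, hzero]
      linarith
    have h4 : 0 ≤ ∑ l ∈ S, max (d l) 0 :=
      Finset.sum_nonneg fun l _ => le_max_right _ 0
    have h3 : Mq - mq ≤ Δ := by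
      obtain ⟨lM, hlM, hMe⟩ := S.exists_mem_eq_sup' hne g
      obtain ⟨lm, hlm, hme⟩ := S.exists_mem_eq_inf' hne g
      have := hosc lM hlM lm hlm
      rw [hMq, hmq, hMe, hme]
      calc g lM - g lm ≤ |g lM - g lm| := le_abs_self _
        _ ≤ Δ := this
    have := mul_le_mul_of_nonneg_left h3 h4
    calc ∑ l ∈ S, d l * g l ≤ (∑ l ∈ S, max (d l) 0) * Mq + (∑ l ∈ S, min (d l) 0) * mq := h1
      _ = (∑ l ∈ S, max (d l) 0) * (Mq - mq) := by rw [h2]; ring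
      _ ≤ (∑ l ∈ S, max (d l) 0) * Δ := this

lemma contraction (hC : IsClustering C) {P B : Matrix (Fin n) (Fin n) ℝ}
    (hP : IsStochastic P) (hPI : InterClusterCommonInfluence C P)
    {μ : ℝ} (hμ1 : μ ≤ 1) (hμ : ∀ p, ∀ i ∈ C p, ∀ j ∈ C p, μ ≤ ∑ k, min (P i k) (P j k)) :
    DeltaC C (P * B) ≤ (1 - μ) * DeltaC C B := by
  set Δ := DeltaC C B with hΔdef
  have hΔ0 : 0 ≤ Δ := delta_nonneg B
  apply delta_le (mul_nonneg (by linarith) hΔ0)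
  intro p i hi j hj k
  have key : ∀ i ∈ C p, ∀ j ∈ C p, (P * B) i k - (P * B) j k ≤ (1 - μ) * Δ := by
    intro i hi j hj
    have e1 : (P * B) i k - (P * B) j k = ∑ l, (P i l - P j l) * B l k := by
      simp only [Matrix.mul_apply, ← Finset.sum_sub_distrib, sub_mul]
    rw [e1]
    rw [sum_clusters hC (f := fun l => (P i l - P j l) * B l k)]
    have step : ∀ q, ∑ l ∈ C q, (P i l - P j l) * B l k
        ≤ (∑ l ∈ C q, max (P i l - P j l) 0) * Δ := by
      intro q
      refine cluster_sum_le _ _ ?_ hΔ0 ?_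
      · have := hPI p q i hi j hj
        rw [Finset.sum_sub_distrib, this, sub_self]
      · intro l hl l' hl'
        exact abs_le_delta hl hl' k
    calc ∑ q, ∑ l ∈ C q, (P i l - P j l) * B l k
        ≤ ∑ q, (∑ l ∈ C q, max (P i l - P j l) 0) * Δ := Finset.sum_le_sum fun q _ => step q
      _ = (∑ q, ∑ l ∈ C q, max (P i l - P j l) 0) * Δ := by rw [Finset.sum_mul]
      _ = (∑ l, max (P i l - P j l) 0) * Δ := by
          rw [← sum_clusters hC (f := fun l => max (P i l - P j l) 0)]
      _ = (1 - ∑ l, min (P i l) (P j l)) * Δ := by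
          congr 1
          have : ∀ l, max (P i l - P j l) 0 = P i l - min (P i l) (P j l) := by
            intro l
            rcases le_total (P i l) (P j l) with h | h
            · rw [max_eq_right (by linarith), min_eq_left h]; ring
            · rw [max_eq_left (by linarith), min_eq_right h]
          rw [Finset.sum_congr rfl (fun l _ => this l), Finset.sum_sub_distrib, hP.2 i]
      _ ≤ (1 - μ) * Δ := by
          apply mul_le_mul_of_nonneg_right _ hΔ0
          have := hμ p i hi j hj
          linarith
  have h1 := key i hi j hj
  have h2 := key j hj i hi
  rw [abs_sub_le_iff]
  exact ⟨h1, h2⟩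

lemma reaches_pos {A : Matrix (Fin n) (Fin n) ℝ} (hA : IsStochastic A)
    {v i : Fin n} (h : Reaches A v i) : ∃ m, 0 < (A ^ m) i v := by
  induction h with
  | refl => exact ⟨0, by simp [Matrix.one_apply]⟩
  | @tail b c hvb hbc ih =>
    obtain ⟨m, hm⟩ := ih
    refine ⟨m + 1, ?_⟩
    rw [pow_succ']
    rw [Matrix.mul_apply]
    have hterm : 0 < A c b * (A ^ m) b v := mul_pos hbc hm
    apply lt_of_lt_of_le hterm
    apply Finset.single_le_sum (f := fun l => A c l * (A ^ m) l v)
      (fun l _ => mul_nonneg (hA.1 c l) ((stoch_pow hA m).1 l v)) (Finset.mem_univ b)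

lemma pos_mono {A : Matrix (Fin n) (Fin n) ℝ} (hA : IsStochastic A)
    (hdiag : ∀ i, 0 < A i i) {v i : Fin n} {m m' : ℕ} (hmm : m ≤ m')
    (h : 0 < (A ^ m) i v) : 0 < (A ^ m') i v := by
  induction m', hmm using Nat.le_induction with
  | base => exact h
  | succ u hu ih =>
    rw [pow_succ', Matrix.mul_apply]
    have hterm : 0 < A i i * (A ^ u) i v := mul_pos (hdiag i) ih
    apply lt_of_lt_of_le hterm
    apply Finset.single_le_sum (f := fun l => A i l * (A ^ u) l v)
      (fun l _ => mul_nonneg (hA.1 i l) ((stoch_pow hA u).1 l v)) (Finset.mem_univ i)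

end core
theorem stmt7 {n K : ℕ} (C : Fin K → Finset (Fin n)) (hC : IsClustering C)
    (A : Matrix (Fin n) (Fin n) ℝ) (hA : IsStochastic A)
    (hinfl : InterClusterCommonInfluence C A)
    (hspan : HasClusterSpanningTrees C A)
    (hdiag : ∀ i, 0 < A i i) :
    (∃ M q : ℝ, 0 ≤ M ∧ 0 < q ∧ q < 1 ∧
      ∀ t : ℕ, 1 ≤ t → DeltaC C (A ^ t) ≤ M * q ^ t) ∧
      Tendsto (fun t : ℕ => DeltaC C (A ^ t)) atTop (𝓝 0) := by
  classical
  rcases Nat.eq_zero_or_pos n with hn | hn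
  · subst hn
    have hempty : ∀ t : ℕ, DeltaC C (A ^ t) = 0 := by
      intro t
      have he : {d | ∃ p, ∃ i ∈ C p, ∃ j ∈ C p, ∃ k, d = |(A ^ t) i k - (A ^ t) j k|} = ∅ := by
        ext d
        simp only [Set.mem_setOf_eq, Set.mem_empty_iff_false, iff_false]
        rintro ⟨p, i, -⟩
        exact i.elim0
      rw [DeltaC, he, Real.sSup_empty]
    constructor
    · exact ⟨0, 1/2, le_refl 0, by norm_num, by norm_num,
        fun t ht => by rw [hempty]; norm_num⟩
    · have : (fun t : ℕ => DeltaC C (A ^ t)) = fun _ => (0:ℝ) := funext hempty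
      rw [this]
      exact tendsto_const_nhds
  · set i0 : Fin n := ⟨0, hn⟩ with hi0
    obtain ⟨p0, hp0⟩ := hC.2 i0
    choose v hv using hspan
    have hex : ∀ (p : Fin K) (i : Fin n), i ∈ C p → ∃ m, 0 < (A ^ m) i (v p) :=
      fun p i hi => reaches_pos hA (hv p i hi)
    obtain ⟨s, hs1, hspos⟩ : ∃ s, 1 ≤ s ∧ ∀ p, ∀ i ∈ C p, 0 < (A ^ s) i (v p) := by
      set f : Fin K × Fin n → ℕ :=
        fun x => if h : x.2 ∈ C x.1 then (hex x.1 x.2 h).choose else 0 with hf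
      refine ⟨Finset.univ.sup f + 1, Nat.le_add_left _ _, ?_⟩
      intro p i hi
      apply pos_mono hA hdiag (m := f (p, i))
      · calc f (p, i) ≤ Finset.univ.sup f := Finset.le_sup (Finset.mem_univ _)
          _ ≤ Finset.univ.sup f + 1 := Nat.le_succ _
      · have hfe : f (p, i) = (hex p i hi).choose := by
          show (if h : i ∈ C p then (hex p i h).choose else 0) = _
          rw [dif_pos hi]
        rw [hfe]
        exact (hex p i hi).choose_spec
    set T : Finset (Fin K × Fin n × Fin n) :=
      Finset.univ.filter (fun x => x.2.1 ∈ C x.1 ∧ x.2.2 ∈ C x.1) with hT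
    have hTne : T.Nonempty := ⟨(p0, i0, i0), by simp [hT, hp0]⟩
    set μ : ℝ := T.inf' hTne (fun x => ∑ k, min ((A ^ s) x.2.1 k) ((A ^ s) x.2.2 k)) with hμdef
    have hμpos : 0 < μ := by
      rw [hμdef, Finset.lt_inf'_iff]
      intro x hx
      rw [hT, Finset.mem_filter] at hx
      obtain ⟨-, h1, h2⟩ := hx
      calc (0:ℝ) < min ((A ^ s) x.2.1 (v x.1)) ((A ^ s) x.2.2 (v x.1)) :=
            lt_min (hspos x.1 x.2.1 h1) (hspos x.1 x.2.2 h2)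
        _ ≤ ∑ k, min ((A ^ s) x.2.1 k) ((A ^ s) x.2.2 k) :=
            Finset.single_le_sum
              (f := fun k => min ((A ^ s) x.2.1 k) ((A ^ s) x.2.2 k))
              (fun k _ => le_min ((stoch_pow hA s).1 _ _) ((stoch_pow hA s).1 _ _))
              (Finset.mem_univ (v x.1))
    have hμle : ∀ p, ∀ i ∈ C p, ∀ j ∈ C p, μ ≤ ∑ k, min ((A ^ s) i k) ((A ^ s) j k) := by
      intro p i hi j hj
      rw [hμdef]
      have hmem : (p, i, j) ∈ T := by
        rw [hT, Finset.mem_filter]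
        exact ⟨Finset.mem_univ _, hi, hj⟩
      exact Finset.inf'_le _ hmem
    set μ' : ℝ := min μ (1/2) with hμ'def
    have hμ'pos : 0 < μ' := lt_min hμpos (by norm_num)
    have hμ'half : μ' ≤ 1/2 := min_le_right _ _
    set r : ℝ := 1 - μ' with hrdef
    have hr0 : 0 < r := by rw [hrdef]; linarith
    have hr1 : r < 1 := by rw [hrdef]; linarith
    have hrhalf : 1/2 ≤ r := by rw [hrdef]; linarith
    have hcontr : ∀ m : ℕ, DeltaC C (A ^ (m + s)) ≤ r * DeltaC C (A ^ m) := by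
      intro m
      have he : A ^ (m + s) = A ^ s * A ^ m := by rw [add_comm, pow_add]
      rw [he, hrdef]
      exact contraction hC (stoch_pow hA s) (ici_pow hC hinfl s) (by linarith)
        (fun p i hi j hj => le_trans (min_le_left _ _) (hμle p i hi j hj))
    have hchain : ∀ a u : ℕ, DeltaC C (A ^ (s * a + u)) ≤ r ^ a * DeltaC C (A ^ u) := by
      intro a
      induction a with
      | zero => intro u; simp
      | succ a ih =>
        intro u
        have he : s * (a + 1) + u = (s * a + u) + s := by ring
        rw [he]
        calc DeltaC C (A ^ ((s * a + u) + s)) ≤ r * DeltaC C (A ^ (s * a + u)) := hcontr _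
          _ ≤ r * (r ^ a * DeltaC C (A ^ u)) := mul_le_mul_of_nonneg_left (ih u) hr0.le
          _ = r ^ (a + 1) * DeltaC C (A ^ u) := by ring
    have hdel1 : ∀ u : ℕ, DeltaC C (A ^ u) ≤ 1 := by
      intro u
      apply delta_le zero_le_one
      intro p i hi j hj k
      have h1 := (stoch_pow hA u).1 i k
      have h2 := (stoch_pow hA u).1 j k
      have h3 := stoch_entry_le_one (stoch_pow hA u) i k
      have h4 := stoch_entry_le_one (stoch_pow hA u) j k
      rw [abs_sub_le_iff]
      constructor <;> linarith
    have hspos' : (0:ℝ) < (s : ℝ) := by exact_mod_cast hs1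
    set q : ℝ := r ^ ((1:ℝ)/(s:ℝ)) with hqdef
    have hq0 : 0 < q := Real.rpow_pos_of_pos hr0 _
    have hq1 : q < 1 := Real.rpow_lt_one hr0.le hr1 (by positivity)
    have hqt : ∀ t : ℕ, q ^ t = r ^ ((t:ℝ)/(s:ℝ)) := by
      intro t
      rw [hqdef, ← Real.rpow_natCast (r ^ ((1:ℝ)/(s:ℝ))) t, ← Real.rpow_mul hr0.le]
      congr 1
      field_simp
    have hbound : ∀ t : ℕ, 1 ≤ t → DeltaC C (A ^ t) ≤ 2 * q ^ t := by
      intro t ht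
      obtain ⟨a, b, hb, hts⟩ : ∃ a b, b < s ∧ t = s * a + (b + 1) := by
        refine ⟨(t - 1) / s, (t - 1) % s, Nat.mod_lt _ hs1, ?_⟩
        have := Nat.div_add_mod (t - 1) s
        omega
      have h1 : DeltaC C (A ^ t) ≤ r ^ a := by
        calc DeltaC C (A ^ t) = DeltaC C (A ^ (s * a + (b + 1))) := by rw [hts]
          _ ≤ r ^ a * DeltaC C (A ^ (b + 1)) := hchain a (b + 1)
          _ ≤ r ^ a * 1 := mul_le_mul_of_nonneg_left (hdel1 _) (pow_nonneg hr0.le a)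
          _ = r ^ a := mul_one _
      have h2 : r ^ a ≤ 2 * q ^ t := by
        rw [hqt t]
        have hta : (t:ℝ)/(s:ℝ) ≤ (a:ℝ) + 1 := by
          rw [div_le_iff₀ hspos']
          have hts' : t ≤ s * (a + 1) := by
            have hmul : s * (a + 1) = s * a + s := by ring
            omega
          calc (t:ℝ) ≤ ((s * (a + 1) : ℕ) : ℝ) := by exact_mod_cast hts'
            _ = ((a:ℝ) + 1) * (s:ℝ) := by push_cast; ring
        have hmono : r ^ ((a:ℝ) + 1) ≤ r ^ ((t:ℝ)/(s:ℝ)) :=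
          Real.rpow_le_rpow_of_exponent_ge hr0 hr1.le hta
        rw [Real.rpow_add_one hr0.ne' (a:ℝ), Real.rpow_natCast] at hmono
        nlinarith [pow_nonneg hr0.le a]
      linarith
    refine ⟨⟨2, q, by norm_num, hq0, hq1, hbound⟩, ?_⟩
    have htend : Tendsto (fun t : ℕ => 2 * q ^ t) atTop (𝓝 0) := by
      have := (tendsto_pow_atTop_nhds_zero_of_lt_one hq0.le hq1).const_mul (2:ℝ)
      simpa using this
    apply squeeze_zero' (Filter.Eventually.of_forall fun t => delta_nonneg _) ?_ htend
    filter_upwards [Filter.eventually_ge_atTop 1] with t ht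
    exact hbound t ht
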